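/- arXiv:2509.05089 — 5 statements merged into one kernel-verified Lean document; each statement's English description precedes it below -/
import Mathlib

section
/- For any finite set B of positive integers, there exists a finite hypergraph H = (X, F) such that Maker, moving first, wins the (b:b) Maker-Breaker game on H if and only if b is not in B. -/
/-!
Take a centre `c` and, for each `j < max B`, a block of size `s j`, the least element of `B`
above `j`; a winning set is any set containing `c` and meeting every block. For `0 < b ≤ m`,
Maker wins the `(m:b)` game iff fewer than `m` blocks have size at most `b`. If there are at
least `m` of them, Maker must take `c` at once (or Breaker takes it), and Breaker then claims a
whole small block that her first move missed. Otherwise Maker opens with `c` and a vertex of each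
small block; every remaining block has more than `b` vertices, and from then on she always covers
each uncovered block that Breaker has touched. Finally, the number of blocks of size at most `b`
is `b` when `b ∈ B` and less than `b` otherwise.
-/

/-- The `(m:b)` Maker-Breaker game on the hypergraph with winning sets `F`.
`mbWin m b F t M B` means: with Maker to move, Maker already owning the
elements of `M` and Breaker those of `B`, Maker has a strategy to claim all
elements of some winning set within at most `t` further Maker moves (rounds).
In each round Maker claims up to `m` unclaimed elements, then Breaker claims
up to `b` unclaimed elements. -/
def mbWin (m b : ℕ) {X : Type} (F : Set (Set X)) : ℕ → Set X → Set X → Prop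
  | 0, M, _ => ∃ e ∈ F, e ⊆ M
  | (t+1), M, B => (∃ e ∈ F, e ⊆ M) ∨
      ∃ S : Set X, S.Finite ∧ S.ncard ≤ m ∧ Disjoint S (M ∪ B) ∧
        ∀ T : Set X, T.Finite → T.ncard ≤ b → Disjoint T (M ∪ B ∪ S) →
          mbWin m b F t (M ∪ S) (B ∪ T)

open Set Function

section PointedTransversals

variable {X ι : Type} (c : X) (blk : ι → Finset X)

def pointedTransversals : Set (Set X) :=
  {e | c ∈ e ∧ ∀ j, ¬Disjoint (blk j : Set X) e}

variable {c blk}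

theorem exists_mem_pointedTransversals_subset_iff {M : Set X} :
    (∃ e ∈ pointedTransversals c blk, e ⊆ M) ↔
      c ∈ M ∧ {j | Disjoint (blk j : Set X) M} = ∅ :=
  ⟨fun ⟨_, ⟨hce, hblk⟩, heM⟩ =>
      ⟨heM hce, eq_empty_of_forall_notMem fun j h => hblk j (h.mono_right heM)⟩,
    fun ⟨hcM, hU⟩ => ⟨M, ⟨hcM, eq_empty_iff_forall_notMem.1 hU⟩, subset_rfl⟩⟩

omit c in
theorem ncard_setOf_not_disjoint_le (hdisj : Pairwise (Disjoint on blk)) {T : Set X}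
    (hT : T.Finite) : {j | ¬Disjoint (blk j : Set X) T}.ncard ≤ T.ncard := by
  obtain rfl | ⟨x₀, -⟩ := T.eq_empty_or_nonempty
  · simp
  have : Nonempty X := ⟨x₀⟩
  have hmeet : ∀ j ∈ {j | ¬Disjoint (blk j : Set X) T}, ∃ x, x ∈ blk j ∧ x ∈ T :=
    fun j hj => not_disjoint_iff.1 hj
  choose! x hx using hmeet
  refine ncard_le_ncard_of_injOn x (fun j hj => (hx j hj).2) (fun j hj j' hj' hjj' => ?_) hT
  exact hdisj.eq (Finset.not_disjoint_iff.2 ⟨x j, (hx j hj).1, hjj' ▸ (hx j' hj').1⟩)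

end PointedTransversals

theorem not_mbWin_of_blocking_subset {X : Type} {F : Set (Set X)} {D B : Set X}
    (hD : ∀ e ∈ F, ¬Disjoint e D) (hDB : D ⊆ B) (m b t : ℕ) {M : Set X}
    (hMD : Disjoint M D) : ¬mbWin m b F t M B := by
  have hlost : ∀ M : Set X, Disjoint M D → ¬∃ e ∈ F, e ⊆ M :=
    fun M hMD ⟨e, he, heM⟩ => hD e he (hMD.mono_left heM)
  induction t generalizing M with
  | zero => exact hlost M hMD
  | succ t ih =>
    rintro (hwon | ⟨S, -, -, hS, hmove⟩)
    · exact hlost M hMD hwon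
    · refine ih (disjoint_union_left.2 ⟨hMD, hS.mono_right ?_⟩) ?_
      · exact subset_union_of_subset_right hDB M
      · simpa using hmove ∅ finite_empty (by simp) (by simp)

section Game

variable {X ι : Type} [Finite ι] {c : X} {blk : ι → Finset X} {m b : ℕ}

/-- Maker must take `c` at once, and then at most `m - 1` blocks meet her first move, so
Breaker can claim a whole small block she missed. -/
theorem not_mbWin_pointedTransversals (hb : 0 < b) (hc : ∀ j, c ∉ blk j)
    (hdisj : Pairwise (Disjoint on blk)) (hsmall : m ≤ {j | (blk j).card ≤ b}.ncard) (t : ℕ) :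
    ¬mbWin m b (pointedTransversals c blk) t ∅ ∅ := by
  have hlost : ¬∃ e ∈ pointedTransversals c blk, e ⊆ ∅ := fun ⟨e, he, he0⟩ => he0 he.1
  cases t with
  | zero => exact hlost
  | succ t =>
    rintro (hwon | ⟨S, hSfin, hSm, -, hmove⟩)
    · exact hlost hwon
    simp only [empty_union] at hmove
    suffices ∃ D : Set X, D.Finite ∧ D.ncard ≤ b ∧ Disjoint D S ∧
        ∀ e ∈ pointedTransversals c blk, ¬Disjoint e D by
      obtain ⟨D, hDfin, hDb, hDS, hD⟩ := this
      exact not_mbWin_of_blocking_subset hD subset_rfl m b t hDS.symm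
        (hmove D hDfin hDb hDS)
    by_cases hcS : c ∈ S
    · have hmissed : {j | ¬Disjoint (blk j : Set X) S}.ncard < m :=
        calc {j | ¬Disjoint (blk j : Set X) S}.ncard
            ≤ {j | ¬Disjoint (blk j : Set X) (S \ {c})}.ncard := by
              refine ncard_le_ncard fun j hj hdj => hj (disjoint_left.2 fun x hxj hxS => ?_)
              have hxc : x ≠ c := fun hxc => hc j (hxc ▸ hxj)
              exact disjoint_left.1 hdj hxj ⟨hxS, hxc⟩
          _ ≤ (S \ {c}).ncard := ncard_setOf_not_disjoint_le hdisj hSfin.sdiff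
          _ < S.ncard := ncard_sdiff_singleton_lt_of_mem hcS hSfin
          _ ≤ m := hSm
      obtain ⟨j, hjsmall, hjS⟩ : ∃ j, (blk j).card ≤ b ∧ Disjoint (blk j : Set X) S := by
        by_contra! h
        exact (ncard_le_ncard h).not_gt (hmissed.trans_le hsmall)
      exact ⟨blk j, Finset.finite_toSet _, by simpa using hjsmall, hjS,
        fun e he hdis => he.2 j hdis.symm⟩
    · refine ⟨{c}, finite_singleton c, by rw [ncard_singleton]; exact hb,
        disjoint_singleton_left.2 hcS, fun e he hdis => ?_⟩
      exact hdis.notMem_of_mem_left he.1 rfl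

theorem exists_targets_covering_touched_blocks (hbm : b ≤ m) (hdisj : Pairwise (Disjoint on blk))
    {M B T : Set X} (hT : T.Finite) (hTb : T.ncard ≤ b)
    (hU : ∀ j, Disjoint (blk j : Set X) M → b < (blk j).card ∧ (blk j : Set X) ∩ B ⊆ T) :
    ∃ P ⊆ {j | Disjoint (blk j : Set X) M},
      P.ncard = min m {j | Disjoint (blk j : Set X) M}.ncard ∧
      (∀ j, Disjoint (blk j : Set X) M → j ∉ P → Disjoint (blk j : Set X) B) ∧
      ∀ j ∈ P, ∃ x ∈ blk j, x ∉ M ∧ x ∉ B := by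
  set A := {j | Disjoint (blk j : Set X) M ∧ ¬Disjoint (blk j : Set X) B}
  have hAT : A.ncard ≤ T.ncard := by
    refine (ncard_le_ncard fun j hj hjT => hj.2 ?_).trans (ncard_setOf_not_disjoint_le hdisj hT)
    exact disjoint_left.2 fun x hxj hxB => disjoint_left.1 hjT hxj ((hU j hj.1).2 ⟨hxj, hxB⟩)
  have hAU : A ⊆ {j | Disjoint (blk j : Set X) M} := fun j hj => hj.1
  obtain ⟨P, hAP, hPU, hPcard⟩ := exists_subsuperset_card_eq hAU
    (le_min (hAT.trans (hTb.trans hbm)) (ncard_le_ncard hAU)) (min_le_right _ _)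
  refine ⟨P, hPU, hPcard, fun j hjM hjP => not_not.1 fun hjB => hjP (hAP ⟨hjM, hjB⟩),
    fun j hj => ?_⟩
  obtain ⟨hbig, hBT⟩ := hU j (hPU hj)
  obtain ⟨x, hxj, hxT⟩ := exists_mem_notMem_of_ncard_lt_ncard (s := T) (t := blk j)
    (by rw [ncard_coe_finset]; omega) hT
  exact ⟨x, hxj, disjoint_left.1 (hPU hj) hxj, fun hxB => hxT (hBT ⟨hxj, hxB⟩)⟩

/-- Maker claims a fresh vertex in every uncovered block that `T` touches, filling up to `m`
uncovered blocks. The blocks still uncovered are then free of Breaker, so after his reply the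
hypotheses hold again with his new claims as `T`. -/
theorem mbWin_pointedTransversals_of_invariant (hbm : b ≤ m) (hm : 0 < m)
    (hdisj : Pairwise (Disjoint on blk)) {t : ℕ} {M B T : Set X} (hcM : c ∈ M) (hT : T.Finite)
    (hTb : T.ncard ≤ b)
    (hU : ∀ j, Disjoint (blk j : Set X) M → b < (blk j).card ∧ (blk j : Set X) ∩ B ⊆ T)
    (ht : {j | Disjoint (blk j : Set X) M}.ncard ≤ t) :
    mbWin m b (pointedTransversals c blk) t M B := by
  induction t generalizing M B T with
  | zero =>
    exact exists_mem_pointedTransversals_subset_iff.2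
      ⟨hcM, (ncard_eq_zero).1 (Nat.le_zero.1 ht)⟩
  | succ t ih =>
    obtain ⟨P, hPU, hPcard, huntouched, hfree⟩ :=
      exists_targets_covering_touched_blocks hbm hdisj hT hTb hU
    set U := {j | Disjoint (blk j : Set X) M}
    obtain hU0 | hUne := U.eq_empty_or_nonempty
    · exact Or.inl (exists_mem_pointedTransversals_subset_iff.2 ⟨hcM, hU0⟩)
    have : Nonempty X := ⟨c⟩
    choose! pick hpick using hfree
    refine Or.inr ⟨pick '' P, (toFinite P).image pick, ?_, ?_, fun T' hT' hT'b _ => ?_⟩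
    · exact (ncard_image_le (toFinite P)).trans (hPcard ▸ min_le_left _ _)
    · refine disjoint_left.2 ?_
      rintro _ ⟨j, hj, rfl⟩ (hxM | hxB)
      exacts [(hpick j hj).2.1 hxM, (hpick j hj).2.2 hxB]
    have hU' : {j | Disjoint (blk j : Set X) (M ∪ pick '' P)} ⊆ U \ P := by
      intro j hj
      obtain ⟨hjM, hjP⟩ := disjoint_union_right.1 hj
      exact ⟨hjM, fun hjP' => disjoint_left.1 hjP (hpick j hjP').1 (mem_image_of_mem pick hjP')⟩
    refine ih (Or.inl hcM) hT' hT'b (fun j hj => ?_) ?_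
    · obtain ⟨hjU, hjP⟩ := hU' hj
      have hjB := huntouched j hjU hjP
      exact ⟨(hU j hjU).1, fun x ⟨hxj, hx⟩ => hx.resolve_left (disjoint_left.1 hjB hxj)⟩
    · calc _ ≤ (U \ P).ncard := ncard_le_ncard hU'
        _ = U.ncard - P.ncard := ncard_sdiff hPU
        _ ≤ t := by have := hUne.ncard_pos; omega

theorem mbWin_pointedTransversals (hbm : b ≤ m) (hdisj : Pairwise (Disjoint on blk))
    (hne : ∀ j, (blk j).Nonempty) (hsmall : {j | (blk j).card ≤ b}.ncard < m) :
    mbWin m b (pointedTransversals c blk) (Nat.card ι + 1) ∅ ∅ := by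
  choose x hx using hne
  set S := insert c (x '' {j | (blk j).card ≤ b})
  have hSm : S.ncard ≤ m :=
    calc S.ncard ≤ (x '' {j | (blk j).card ≤ b}).ncard + 1 := ncard_insert_le _ _
      _ ≤ {j | (blk j).card ≤ b}.ncard + 1 := by grw [ncard_image_le (toFinite _)]
      _ ≤ m := hsmall
  refine Or.inr ⟨S, ((toFinite _).image x).insert c, hSm, by simp, fun T hT hTb _ => ?_⟩
  rw [empty_union, empty_union]
  refine mbWin_pointedTransversals_of_invariant hbm (Nat.zero_lt_of_lt hsmall) hdisj
    (mem_insert c _) hT hTb (fun j hj => ⟨?_, inter_subset_right⟩) (ncard_le_card _)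
  by_contra! hjsmall
  exact disjoint_left.1 hj (hx j) (mem_insert_of_mem c (mem_image_of_mem x hjsmall))

theorem exists_mbWin_pointedTransversals_iff (hb : 0 < b) (hbm : b ≤ m) (hc : ∀ j, c ∉ blk j)
    (hdisj : Pairwise (Disjoint on blk)) (hne : ∀ j, (blk j).Nonempty) :
    (∃ t, mbWin m b (pointedTransversals c blk) t ∅ ∅) ↔
      {j | (blk j).card ≤ b}.ncard < m :=
  ⟨fun ⟨t, ht⟩ => not_le.1 fun hsmall =>
      not_mbWin_pointedTransversals hb hc hdisj hsmall t ht,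
    fun hsmall => ⟨_, mbWin_pointedTransversals hbm hdisj hne hsmall⟩⟩

end Game

theorem exists_fin_pointed_blocks {ι : Type} [Fintype ι] (s : ι → ℕ) :
    ∃ (n : ℕ) (c : Fin n) (blk : ι → Finset (Fin n)),
      (∀ j, c ∉ blk j) ∧ Pairwise (Disjoint on blk) ∧ ∀ j, (blk j).card = s j := by
  let e := Fintype.equivFin (Option (Σ j, Fin (s j)))
  refine ⟨_, e none, fun j => Finset.univ.map
    (((Embedding.sigmaMk j).trans Embedding.some).trans e.toEmbedding), ?_, ?_, ?_⟩
  · simp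
  · intro j j' hjj'
    simp [Finset.disjoint_left, hjj'.symm]
  · simp

theorem ncard_setOf_fin_val_lt (n k : ℕ) : {i : Fin n | ↑i < k}.ncard = min n k := by
  rw [← Fin.card_filter_val_lt, ← ncard_coe_finset]
  simp

/-- It is `0` when no element of `B` exceeds `j`. -/
noncomputable def leastGT (B : Finset ℕ) (j : ℕ) : ℕ := sInf {q | q ∈ B ∧ j < q}

section LeastGT

variable {B : Finset ℕ} {j : ℕ}

theorem leastGT_mem_and_lt (hj : j < B.sup id) : leastGT B j ∈ B ∧ j < leastGT B j :=
  Nat.sInf_mem (Finset.lt_sup_iff.1 hj)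

theorem leastGT_le {q : ℕ} (hq : q ∈ B) (hjq : j < q) : leastGT B j ≤ q :=
  Nat.sInf_le ⟨hq, hjq⟩

/-- For `b ∈ B` every `j < b` counts; for `b ∉ B`, `leastGT B j ≤ b` forces
`j < leastGT B j < b`. -/
theorem ncard_setOf_leastGT_le_lt_iff (B : Finset ℕ) {b : ℕ} (hb : 0 < b) :
    {j : Fin (B.sup id) | leastGT B j ≤ b}.ncard < b ↔ b ∉ B := by
  refine ⟨fun hlt hbB => ?_, fun hbB => ?_⟩
  · have hle := ncard_le_ncard (s := {j : Fin (B.sup id) | ↑j < b})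
      (t := {j | leastGT B j ≤ b}) fun j hj => leastGT_le hbB hj
    have hbsup : b ≤ B.sup id := Finset.le_sup (f := id) hbB
    rw [ncard_setOf_fin_val_lt] at hle
    omega
  · calc {j : Fin (B.sup id) | leastGT B j ≤ b}.ncard
        ≤ {j : Fin (B.sup id) | ↑j < b - 1}.ncard := by
          refine ncard_le_ncard fun j (hj : leastGT B j ≤ b) => ?_
          obtain ⟨hmem, hlt⟩ := leastGT_mem_and_lt j.2
          have : leastGT B j ≠ b := fun h => hbB (h ▸ hmem)
          show ↑j < b - 1
          omega
      _ ≤ b - 1 := (ncard_setOf_fin_val_lt _ _).trans_le (min_le_right _ _)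
      _ < b := by omega

end LeastGT

theorem maker_breaker_fair_nonmonotone_general (B : Finset ℕ) :
    ∃ (n : ℕ) (F : Set (Set (Fin n))),
      ∀ b : ℕ, 0 < b → ((∃ t, mbWin b b F t ∅ ∅) ↔ b ∉ B) := by
  obtain ⟨n, c, blk, hc, hdisj, hcard⟩ :=
    exists_fin_pointed_blocks fun j : Fin (B.sup id) => leastGT B j
  have hne : ∀ j, (blk j).Nonempty := fun j =>
    Finset.card_pos.1 (hcard j ▸ Nat.zero_lt_of_lt (leastGT_mem_and_lt j.2).2)
  refine ⟨n, pointedTransversals c blk, fun b hb => ?_⟩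
  rw [exists_mbWin_pointedTransversals_iff hb le_rfl hc hdisj hne]
  simpa only [hcard] using ncard_setOf_leastGT_le_lt_iff B hb

/-- For any finite set `B` of positive integers there is a finite
hypergraph `H = (X, F)` such that Maker, moving first, wins the `(b:b)`
Maker-Breaker game on `H` if and only if `b ∉ B`. -/
theorem maker_breaker_fair_nonmonotone (B : Finset ℕ) (hB : ∀ x ∈ B, 0 < x) :
    ∃ (n : ℕ) (F : Set (Set (Fin n))),
      ∀ b : ℕ, 0 < b → ((∃ t, mbWin b b F t ∅ ∅) ↔ b ∉ B) :=
  maker_breaker_fair_nonmonotone_general B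
end

section
/- Let H = (X, F) be a hypergraph with nonempty hyperedge set and let G = G(H, a) be the graph from the transference construction (vertex set X plus sets X_A of size 4a(|X| + |V(H)|) for each vertex cover A of H; G[X] complete; each w ∈ X_A adjacent exactly to the vertices of A within X). Then the domination number of G equals min{|F| : F ∈ F}. -/
/-- The vertex covers of the hypergraph `(X, F)`: sets meeting every hyperedge. -/
def vertexCovers {X : Type} (F : Set (Set X)) : Set (Set X) :=
  {A | ∀ e ∈ F, (A ∩ e).Nonempty}

/-- Vertex set of the transference graph `G(H, a)`: the board `X` together with,
for every vertex cover `A`, a set `X_A` of `4a(|X| + |𝒱(H)|)` fresh vertices. -/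
def TVert (X : Type) (F : Set (Set X)) (a : ℕ) : Type :=
  X ⊕ ({A : Set X // A ∈ vertexCovers F} × Fin (4 * a * (Nat.card X + (vertexCovers F).ncard)))

/-- The transference graph `G(H, a)`: `G[X]` is complete, and a fresh vertex of
`X_A` is adjacent exactly to the vertices of the vertex cover `A`. -/
def TGraph (X : Type) (F : Set (Set X)) (a : ℕ) : SimpleGraph (TVert X F a) where
  Adj p q := match p, q with
    | Sum.inl u, Sum.inl v => u ≠ v
    | Sum.inl u, Sum.inr q => u ∈ q.1.1
    | Sum.inr p, Sum.inl v => v ∈ p.1.1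
    | Sum.inr _, Sum.inr _ => False
  symm := by
    constructor
    rintro (u | p) (v | q) h
    · exact Ne.symm h
    · exact h
    · exact h
    · exact h.elim
  loopless := by
    constructor
    rintro (u | p) h
    · exact h rfl
    · exact h

/-- `D` is a dominating set of `G`. -/
def IsDomSet {V : Type} (G : SimpleGraph V) (D : Set V) : Prop :=
  ∀ v, v ∈ D ∨ ∃ u ∈ D, G.Adj u v

theorem compl_mem_vertexCovers_iff {X : Type} {F : Set (Set X)} {B : Set X} :
    Bᶜ ∈ vertexCovers F ↔ ∀ e ∈ F, ¬ e ⊆ B := by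
  simp only [vertexCovers, Set.mem_ofPred_eq, Set.not_subset, Set.Nonempty, Set.mem_inter_iff,
    Set.mem_compl_iff]
  exact forall₂_congr fun _ _ => exists_congr fun _ => and_comm

namespace TGraph

variable {X : Type} {F : Set (Set X)} {a : ℕ}

instance [Finite X] : Finite (TVert X F a) :=
  inferInstanceAs (Finite (X ⊕ _))

theorem isDomSet_image_inl {e : Set X} (he : e ∈ F) (hne : e.Nonempty) :
    IsDomSet (TGraph X F a) (Sum.inl '' e) := by
  rintro (x | ⟨⟨A, hA⟩, i⟩)
  · by_cases hx : x ∈ e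
    · exact Or.inl ⟨x, hx, rfl⟩
    · obtain ⟨y, hy⟩ := hne
      exact Or.inr ⟨Sum.inl y, ⟨y, hy, rfl⟩, fun hyx => hx (hyx ▸ hy)⟩
  · obtain ⟨y, hyA, hye⟩ := hA e he
    exact Or.inr ⟨Sum.inl y, ⟨y, hye, rfl⟩, hyA⟩

/-- A vertex of `X_A` has no neighbours outside `A`, so if `D` misses `A` it must contain
all of `X_A`. -/
theorem block_card_le_ncard_of_isDomSet [Finite X] {D : Set (TVert X F a)}
    (hD : IsDomSet (TGraph X F a) D) (A : {A : Set X // A ∈ vertexCovers F})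
    (hAD : ∀ x ∈ A.1, Sum.inl x ∉ D) :
    4 * a * (Nat.card X + (vertexCovers F).ncard) ≤ D.ncard := by
  have hblock : ∀ i, (Sum.inr (A, i) : TVert X F a) ∈ D := by
    intro i
    rcases hD (Sum.inr (A, i)) with h | ⟨u | _, huD, hadj⟩
    · exact h
    · exact absurd huD (hAD u hadj)
    · exact hadj.elim
  calc 4 * a * (Nat.card X + (vertexCovers F).ncard)
      = (Set.univ : Set (Fin (4 * a * (Nat.card X + (vertexCovers F).ncard)))).ncard := by simp
    _ ≤ D.ncard := Set.ncard_le_ncard_of_injOn (fun i => Sum.inr (A, i)) (fun i _ => hblock i)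
        (fun i _ j _ hij => congrArg Prod.snd (Sum.inr_injective hij)) D.toFinite

/-- Were `D` smaller than every hyperedge, the vertices of `X` outside `D` would form a vertex
cover `A`, forcing all of `X_A`, which has at least `|X|` vertices, into `D`. -/
theorem exists_ncard_le_of_isDomSet [Finite X] (ha : 1 ≤ a) (hF : F.Nonempty)
    {D : Set (TVert X F a)} (hD : IsDomSet (TGraph X F a) D) :
    ∃ e ∈ F, e.ncard ≤ D.ncard := by
  by_contra! hsmall
  set B : Set X := Sum.inl ⁻¹' D
  have hBD : B.ncard ≤ D.ncard :=
    Set.ncard_le_ncard_of_injOn Sum.inl (fun _ hx => hx) Sum.inl_injective.injOn D.toFinite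
  have hcover : Bᶜ ∈ vertexCovers F := compl_mem_vertexCovers_iff.mpr fun e he heB =>
    (Set.ncard_le_ncard heB B.toFinite).not_gt (hBD.trans_lt (hsmall e he))
  have hsize := block_card_le_ncard_of_isDomSet hD ⟨Bᶜ, hcover⟩ fun x hx => hx
  obtain ⟨e, he⟩ := hF
  have heX : e.ncard ≤ Nat.card X := Set.ncard_le_card e
  have hXsize : Nat.card X ≤ 4 * a * (Nat.card X + (vertexCovers F).ncard) := by
    nlinarith
  exact (hsmall e he).not_ge (heX.trans (hXsize.trans hsize))

end TGraph

/-- The domination number of the transference graph `G(H, a)`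
equals the minimum size of a hyperedge of `H = (X, F)`. -/
theorem domination_number_transference {X : Type} [Finite X] (F : Set (Set X)) (a : ℕ)
    (ha : 1 ≤ a) (hne : F.Nonempty) (hedges : ∀ e ∈ F, e.Nonempty) :
    sInf {n : ℕ | ∃ D : Set (TVert X F a), IsDomSet (TGraph X F a) D ∧ D.ncard = n} =
      sInf {n : ℕ | ∃ e ∈ F, e.ncard = n} := by
  set R := {n : ℕ | ∃ e ∈ F, e.ncard = n}
  have hdom : ∀ e ∈ F, e.ncard ∈
      {n : ℕ | ∃ D : Set (TVert X F a), IsDomSet (TGraph X F a) D ∧ D.ncard = n} :=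
    fun e he => ⟨_, TGraph.isDomSet_image_inl he (hedges e he),
      Set.ncard_image_of_injective _ Sum.inl_injective⟩
  obtain ⟨e₀, he₀, hmin⟩ := Nat.sInf_mem (s := R) (hne.image Set.ncard)
  obtain ⟨D, hD, hDmin⟩ := Nat.sInf_mem (Set.nonempty_of_mem (hdom e₀ he₀))
  obtain ⟨e, he, heD⟩ := TGraph.exists_ncard_le_of_isDomSet ha hne hD
  apply le_antisymm
  · exact hmin ▸ Nat.sInf_le (hdom e₀ he₀)
  · rw [← hDmin]
    exact (Nat.sInf_le (s := R) ⟨e, he, rfl⟩).trans heD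
end

section
/- Let H = (X, F) be a hypergraph and G = G(H, a) the graph from the transference construction. If D ⊆ X is a dominating set of G, then D contains some hyperedge F ∈ F. -/
theorem exists_subset_of_inter_vertexCovers_nonempty {X : Type} {F : Set (Set X)} {D : Set X}
    (hD : ∀ A ∈ vertexCovers F, (A ∩ D).Nonempty) : ∃ e ∈ F, e ⊆ D := by
  by_contra! hF
  have hcover : Dᶜ ∈ vertexCovers F := fun e he ↦ by
    obtain ⟨x, hxe, hxD⟩ := Set.not_subset.mp (hF e he)
    exact ⟨x, hxD, hxe⟩
  obtain ⟨x, hxD', hxD⟩ := hD _ hcover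
  exact hxD' hxD

theorem TGraph_adj_inl_inr {X : Type} {F : Set (Set X)} {a : ℕ} (u : X)
    (q : {A : Set X // A ∈ vertexCovers F} ×
      Fin (4 * a * (Nat.card X + (vertexCovers F).ncard))) :
    (TGraph X F a).Adj (Sum.inl u) (Sum.inr q) ↔ u ∈ q.1.1 :=
  Iff.rfl

/-- Even when `X` is empty, `A` itself is one of the finitely many vertex covers. -/
theorem TVert_block_size_pos {X : Type} [Finite X] {F : Set (Set X)} {a : ℕ} (ha : 1 ≤ a)
    {A : Set X} (hA : A ∈ vertexCovers F) :
    0 < 4 * a * (Nat.card X + (vertexCovers F).ncard) := by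
  have hcovers : 0 < (vertexCovers F).ncard := (Set.ncard_pos (Set.toFinite _)).mpr ⟨A, hA⟩
  positivity

/-- A vertex of `X_A` has no neighbours outside `A`, so a dominating set inside `X` meets `A`. -/
theorem IsDomSet.inter_vertexCover_nonempty {X : Type} [Finite X] {F : Set (Set X)} {a : ℕ}
    (ha : 1 ≤ a) {D : Set X} (hD : IsDomSet (TGraph X F a) (Sum.inl '' D))
    {A : Set X} (hA : A ∈ vertexCovers F) : (A ∩ D).Nonempty := by
  let v : TVert X F a := Sum.inr (⟨A, hA⟩, ⟨0, TVert_block_size_pos ha hA⟩)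
  rcases hD v with ⟨_, _, hv⟩ | ⟨_, ⟨u, huD, rfl⟩, hadj⟩
  · exact (Sum.inl_ne_inr hv).elim
  · exact ⟨u, (TGraph_adj_inl_inr u _).mp hadj, huD⟩

theorem dominating_subset_contains_hyperedge_general {X : Type} [Finite X] (F : Set (Set X))
    (a : ℕ) (ha : 1 ≤ a) :
    ∀ D : Set X, IsDomSet (TGraph X F a) (Sum.inl '' D) → ∃ e ∈ F, e ⊆ D :=
  fun _ hD ↦ exists_subset_of_inter_vertexCovers_nonempty fun _ ↦ hD.inter_vertexCover_nonempty ha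

/-- If `D ⊆ X` is a dominating set of the transference graph
`G(H, a)`, then `D` contains some hyperedge of `H = (X, F)`. -/
theorem dominating_subset_contains_hyperedge {X : Type} [Finite X] (F : Set (Set X))
    (a : ℕ) (ha : 1 ≤ a) (hne : F.Nonempty) (hedges : ∀ e ∈ F, e.Nonempty) :
    ∀ D : Set X, IsDomSet (TGraph X F a) (Sum.inl '' D) → ∃ e ∈ F, e ⊆ D :=
  dominating_subset_contains_hyperedge_general F a ha
end

section
/- Let m ≤ b be positive integers and let H = (X, F) be a hypergraph with a collection V of pairwise disjoint vertex sets such that: (1) |F| > m for all F ∈ F; (2) |V| = m for all V ∈ V; (3) for all V ∈ V and F ∈ F, either V ⊆ F or V ∩ F = ∅; (4) every vertex not in any set of V lies in at most one hyperedge. If Maker has a winning strategy in the (m:b) Maker-Breaker game on H, then she has a winning strategy in which, in each move, she either claims exactly all m vertices of some set V ∈ V, or claims all remaining unclaimed vertices of some hyperedge F ∈ F and thereby wins immediately; moreover this modified strategy wins at least as fast. -/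
/-- The restricted `(m:b)` Maker-Breaker game in which each Maker move either
claims exactly (all `m` fresh vertices of) a set of the family `𝒱`, or claims
all remaining unclaimed vertices of some hyperedge, thereby winning
immediately. -/
def mbWinRestricted (m b : ℕ) {X : Type} (F 𝒱 : Set (Set X)) :
    ℕ → Set X → Set X → Prop
  | 0, M, _ => ∃ e ∈ F, e ⊆ M
  | (t+1), M, B => (∃ e ∈ F, e ⊆ M) ∨
      ∃ S : Set X, S.Finite ∧ S.ncard ≤ m ∧ Disjoint S (M ∪ B) ∧
        (S ∈ 𝒱 ∨ ∃ e ∈ F, S = e \ M) ∧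
        ∀ T : Set X, T.Finite → T.ncard ≤ b → Disjoint T (M ∪ B ∪ S) →
          mbWinRestricted m b F 𝒱 t (M ∪ S) (B ∪ T)

/-- If Breaker owns fewer vertices, Maker still wins (at least as fast). -/
theorem mbWin_breaker_shrink {m b : ℕ} {X : Type} [Finite X] {F : Set (Set X)} :
    ∀ t (M B B' : Set X), B' ⊆ B → mbWin m b F t M B → mbWin m b F t M B' := by
  intro t
  induction t with
  | zero => intro M B B' _ h; exact h
  | succ t ih =>
    intro M B B' hBB h
    rcases h with h | ⟨S, hSf, hSc, hSd, hS⟩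
    · exact Or.inl h
    · refine Or.inr ⟨S, hSf, hSc, hSd.mono_right (Set.union_subset_union_right M hBB), ?_⟩
      intro T _ hTc hTd
      rw [Set.disjoint_left] at hTd
      have hT' : Disjoint (T \ B) (M ∪ B ∪ S) := by
        rw [Set.disjoint_left]
        rintro y ⟨hyT, hyB⟩ hmem
        rcases hmem with (hM | hB) | hS'
        · exact hTd hyT (Or.inl (Or.inl hM))
        · exact hyB hB
        · exact hTd hyT (Or.inr hS')
      have hkey := hS (T \ B) (Set.toFinite _)
        (le_trans (Set.ncard_le_ncard Set.diff_subset (Set.toFinite _)) hTc) hT'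
      refine ih _ _ _ ?_ hkey
      intro x hx
      rcases hx with hx | hx
      · exact Or.inl (hBB hx)
      · by_cases hxB : x ∈ B
        · exact Or.inl hxB
        · exact Or.inr ⟨hx, hxB⟩

/-- Vertices all of whose hyperedges are already hit by Breaker are dead:
they can be transferred from Maker's side to Breaker's side. -/
theorem mbWin_dead_transfer {m b : ℕ} {X : Type} [Finite X] {F : Set (Set X)} :
    ∀ t (M B D : Set X),
      (∀ x ∈ D, ∀ e ∈ F, x ∈ e → (e ∩ B).Nonempty) →
      Disjoint (M ∪ D) B →
      mbWin m b F t (M ∪ D) B → mbWin m b F t M (B ∪ D) := by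
  intro t
  induction t with
  | zero =>
    intro M B D hdead hdisj h
    obtain ⟨e, heF, heMD⟩ := h
    refine ⟨e, heF, fun x hx => ?_⟩
    rcases heMD hx with hM | hD
    · exact hM
    · obtain ⟨y, hye, hyB⟩ := hdead x hD e heF hx
      exact absurd hyB (Set.disjoint_left.mp hdisj (heMD hye))
  | succ t ih =>
    intro M B D hdead hdisj h
    rcases h with ⟨e, heF, heMD⟩ | ⟨S, hSf, hSc, hSd, hS⟩
    · left
      refine ⟨e, heF, fun x hx => ?_⟩
      rcases heMD hx with hM | hD
      · exact hM
      · obtain ⟨y, hye, hyB⟩ := hdead x hD e heF hx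
        exact absurd hyB (Set.disjoint_left.mp hdisj (heMD hye))
    · right
      rw [Set.disjoint_left] at hSd hdisj
      refine ⟨S, hSf, hSc, ?_, ?_⟩
      · rw [Set.disjoint_left]
        intro x hxS hx
        rcases hx with hM | hB | hD
        · exact hSd hxS (Or.inl (Or.inl hM))
        · exact hSd hxS (Or.inr hB)
        · exact hSd hxS (Or.inl (Or.inr hD))
      · intro T hTf hTc hTd
        rw [Set.disjoint_left] at hTd
        have hTd' : Disjoint T ((M ∪ D) ∪ B ∪ S) := by
          rw [Set.disjoint_left]
          intro x hxT hx
          rcases hx with ((hM | hD') | hB) | hS'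
          · exact hTd hxT (Or.inl (Or.inl hM))
          · exact hTd hxT (Or.inl (Or.inr (Or.inr hD')))
          · exact hTd hxT (Or.inl (Or.inr (Or.inl hB)))
          · exact hTd hxT (Or.inr hS')
        have hkey := hS T hTf hTc hTd'
        have heq : (M ∪ D) ∪ S = (M ∪ S) ∪ D := Set.union_right_comm M D S
        rw [heq] at hkey
        have hdead' : ∀ x ∈ D, ∀ e ∈ F, x ∈ e → (e ∩ (B ∪ T)).Nonempty := by
          intro x hxD e heF hxe
          obtain ⟨y, hye, hyB⟩ := hdead x hxD e heF hxe
          exact ⟨y, hye, Or.inl hyB⟩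
        have hdisj' : Disjoint ((M ∪ S) ∪ D) (B ∪ T) := by
          rw [Set.disjoint_left]
          intro x hx hmem
          rcases hmem with hB | hT
          · rcases hx with (hM | hS') | hD
            · exact hdisj (Or.inl hM) hB
            · exact hSd hS' (Or.inr hB)
            · exact hdisj (Or.inr hD) hB
          · rcases hx with (hM | hS') | hD
            · exact hTd hT (Or.inl (Or.inl hM))
            · exact hTd hT (Or.inr hS')
            · exact hTd hT (Or.inl (Or.inr (Or.inr hD)))
        have := ih (M ∪ S) (B ∪ T) D hdead' hdisj' hkey
        have heq2 : (B ∪ T) ∪ D = (B ∪ D) ∪ T := Set.union_right_comm B T D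
        rwa [heq2] at this

/-- A position with a completed hyperedge is immediately winning. -/
theorem mbWinRestricted_of_edge {m b : ℕ} {X : Type} {F 𝒱 : Set (Set X)}
    (t : ℕ) (M B : Set X) (h : ∃ e ∈ F, e ⊆ M) : mbWinRestricted m b F 𝒱 t M B := by
  cases t with
  | zero => exact h
  | succ t => exact Or.inl h

/-- Winning within `t` rounds implies winning within `t+1` rounds. -/
theorem mbWinRestricted_succ {m b : ℕ} {X : Type} {F 𝒱 : Set (Set X)} :
    ∀ t (M B : Set X), mbWinRestricted m b F 𝒱 t M B → mbWinRestricted m b F 𝒱 (t+1) M B := by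
  intro t
  induction t with
  | zero => intro M B h; exact Or.inl h
  | succ t ih =>
    intro M B h
    rcases h with h | ⟨S, hSf, hSc, hSd, hSform, hS⟩
    · exact Or.inl h
    · exact Or.inr ⟨S, hSf, hSc, hSd, hSform, fun T hTf hTc hTd => ih _ _ (hS T hTf hTc hTd)⟩

theorem maker_plays_on_assoc_sets_aux {X : Type} [Finite X] (m b : ℕ)
    (hm : 0 < m) (hmb : m ≤ b) (F 𝒱 : Set (Set X))
    (hdisj : ∀ W₁ ∈ 𝒱, ∀ W₂ ∈ 𝒱, W₁ ≠ W₂ → Disjoint W₁ W₂)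
    (h1 : ∀ e ∈ F, m < e.ncard)
    (h2 : ∀ W ∈ 𝒱, W.ncard = m)
    (h3 : ∀ W ∈ 𝒱, ∀ e ∈ F, W ⊆ e ∨ Disjoint W e)
    (h4 : ∀ x : X, (∀ W ∈ 𝒱, x ∉ W) → {e | e ∈ F ∧ x ∈ e}.Subsingleton) :
    ∀ t (M B : Set X), Disjoint M B → (∀ W ∈ 𝒱, W ⊆ M ∨ Disjoint W M) →
      mbWin m b F t M B → mbWinRestricted m b F 𝒱 t M B := by
  classical
  intro t
  induction t with
  | zero => intro M B _ _ h; exact h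
  | succ t ih =>
    intro M B hMB hsat h
    rcases h with h | ⟨S, hSf, hSc, hSd, hS⟩
    · exact Or.inl h
    have hSM : ∀ x ∈ S, x ∉ M := fun x hx hM => Set.disjoint_left.mp hSd hx (Or.inl hM)
    have hSB : ∀ x ∈ S, x ∉ B := fun x hx hB => Set.disjoint_left.mp hSd hx (Or.inr hB)
    by_cases hedge : ∃ e ∈ F, e ⊆ M ∪ S
    · -- Maker can finish a hyperedge and win immediately.
      obtain ⟨e, heF, heMS⟩ := hedge
      have hsub : e \ M ⊆ S := by
        rintro x ⟨hxe, hxM⟩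
        rcases heMS hxe with hM | hS'
        · exact absurd hM hxM
        · exact hS'
      refine Or.inr ⟨e \ M, Set.toFinite _,
        le_trans (Set.ncard_le_ncard hsub (Set.toFinite _)) hSc, ?_,
        Or.inr ⟨e, heF, rfl⟩, ?_⟩
      · exact hSd.mono_left hsub
      · intro T _ _ _
        exact mbWinRestricted_of_edge t _ _ ⟨e, heF, fun x hx => by
          by_cases hxM : x ∈ M
          · exact Or.inl hxM
          · exact Or.inr ⟨hx, hxM⟩⟩
    by_cases hfull : ∃ W ∈ 𝒱, W ⊆ S ∧ Disjoint W B
    · -- Maker's move contains a full fresh set of 𝒱; then it equals that set.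
      obtain ⟨W, hWV, hWS, hWB⟩ := hfull
      have hSW : W = S := Set.eq_of_subset_of_ncard_le hWS (by rw [h2 W hWV]; exact hSc)
        (Set.toFinite _)
      refine Or.inr ⟨S, hSf, hSc, hSd, Or.inl (hSW ▸ hWV), ?_⟩
      intro T hTf hTc hTd
      rw [Set.disjoint_left] at hTd
      have hdisj' : Disjoint (M ∪ S) (B ∪ T) := by
        rw [Set.disjoint_left]
        intro x hx hmem
        rcases hmem with hB | hT
        · rcases hx with hM | hS'
          · exact Set.disjoint_left.mp hMB hM hB
          · exact hSB x hS' hB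
        · rcases hx with hM | hS'
          · exact hTd hT (Or.inl (Or.inl hM))
          · exact hTd hT (Or.inr hS')
      have hsat' : ∀ W' ∈ 𝒱, W' ⊆ M ∪ S ∨ Disjoint W' (M ∪ S) := by
        intro W' hW'V
        by_cases hWW : W' = W
        · subst hWW; exact Or.inl (fun x hx => Or.inr (hWS hx))
        · rcases hsat W' hW'V with hsub | hd
          · exact Or.inl (hsub.trans Set.subset_union_left)
          · refine Or.inr (Set.disjoint_left.mpr fun x hx hmem => ?_)
            rcases hmem with hM | hS'
            · exact Set.disjoint_left.mp hd hx hM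
            · exact Set.disjoint_left.mp (hdisj W' hW'V W hWV hWW) hx (hSW ▸ hS' : x ∈ W)
      exact ih (M ∪ S) (B ∪ T) hdisj' hsat'
        (hS T hTf hTc (Set.disjoint_left.mpr hTd))
    · -- Maker's move is useless: Breaker can neutralize every vertex of `S`,
      -- so Maker could have skipped the move and still wins within `t` rounds.
      push_neg at hedge hfull
      -- pointwise neutralization
      have claim : ∀ x : X, ∃ y : X,
          (x ∈ S ∧ ∃ e ∈ F, x ∈ e ∧ ∀ z ∈ e, z ∉ B) →
          ((y ∉ M ∧ y ∉ B ∧ y ∉ S) ∧ ∀ e ∈ F, x ∈ e → y ∈ e) := by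
        intro x
        by_cases hx : x ∈ S ∧ ∃ e ∈ F, x ∈ e ∧ ∀ z ∈ e, z ∉ B
        · obtain ⟨hxS, e₀, he₀F, hxe₀, he₀B⟩ := hx
          by_cases hW : ∃ W ∈ 𝒱, x ∈ W
          · obtain ⟨W, hWV, hxW⟩ := hW
            have hWe₀ : W ⊆ e₀ := by
              rcases h3 W hWV e₀ he₀F with hsub | hd
              · exact hsub
              · exact absurd hxe₀ (Set.disjoint_left.mp hd hxW)
            have hWB : Disjoint W B :=
              Set.disjoint_left.mpr fun z hzW => he₀B z (hWe₀ hzW)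
            have hWnS : ¬ W ⊆ S := fun hc => hfull W hWV hc hWB
            obtain ⟨y, hyW, hyS⟩ := Set.not_subset.mp hWnS
            have hyM : y ∉ M := by
              rcases hsat W hWV with hsub | hd
              · exact absurd (hsub hxW) (hSM x hxS)
              · exact Set.disjoint_left.mp hd hyW
            refine ⟨y, fun _ => ⟨⟨hyM, Set.disjoint_left.mp hWB hyW, hyS⟩, ?_⟩⟩
            intro e heF hxe
            rcases h3 W hWV e heF with hsub | hd
            · exact hsub hyW
            · exact absurd hxe (Set.disjoint_left.mp hd hxW)
          · push_neg at hW
            have hss := h4 x hW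
            have : ¬ e₀ ⊆ M ∪ S := fun hc => hedge e₀ he₀F hc
            obtain ⟨y, hye₀, hyMS⟩ := Set.not_subset.mp this
            refine ⟨y, fun _ => ⟨⟨fun hM => hyMS (Or.inl hM), he₀B y hye₀,
              fun hS' => hyMS (Or.inr hS')⟩, ?_⟩⟩
            intro e heF hxe
            have : e = e₀ := hss ⟨heF, hxe⟩ ⟨he₀F, hxe₀⟩
            rw [this]; exact hye₀
        · exact ⟨x, fun h' => absurd h' hx⟩
      choose f hf using claim
      set L : Set X := {x ∈ S | ∃ e ∈ F, x ∈ e ∧ ∀ z ∈ e, z ∉ B} with hL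
      set N : Set X := f '' L with hN
      have hNprop : ∀ y ∈ N, (y ∉ M ∧ y ∉ B ∧ y ∉ S) := by
        rintro y ⟨x, hxL, rfl⟩
        exact (hf x ⟨hxL.1, hxL.2⟩).1
      have hNd : Disjoint N (M ∪ B ∪ S) := by
        rw [Set.disjoint_left]
        intro y hyN hmem
        obtain ⟨hyM, hyB, hyS⟩ := hNprop y hyN
        rcases hmem with (hM | hB) | hS'
        exacts [hyM hM, hyB hB, hyS hS']
      have hNc : N.ncard ≤ b := by
        calc N.ncard ≤ L.ncard := Set.ncard_image_le (Set.toFinite _)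
          _ ≤ S.ncard := Set.ncard_le_ncard (fun x hx => hx.1) (Set.toFinite _)
          _ ≤ m := hSc
          _ ≤ b := hmb
      have hwin := hS N (Set.toFinite _) hNc hNd
      -- every vertex of S is dead with respect to B ∪ N
      have hdead : ∀ x ∈ S, ∀ e ∈ F, x ∈ e → (e ∩ (B ∪ N)).Nonempty := by
        intro x hxS e heF hxe
        by_cases hlive : ∃ e' ∈ F, x ∈ e' ∧ ∀ z ∈ e', z ∉ B
        · have hxL : x ∈ L := ⟨hxS, hlive⟩
          exact ⟨f x, (hf x ⟨hxS, hlive⟩).2 e heF hxe, Or.inr ⟨x, hxL, rfl⟩⟩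
        · push_neg at hlive
          obtain ⟨z, hze, hzB⟩ := hlive e heF hxe
          exact ⟨z, hze, Or.inl hzB⟩
      have hdisjMS : Disjoint (M ∪ S) (B ∪ N) := by
        rw [Set.disjoint_left]
        intro x hx hmem
        rcases hmem with hB | hN'
        · rcases hx with hM | hS'
          · exact Set.disjoint_left.mp hMB hM hB
          · exact hSB x hS' hB
        · obtain ⟨hyM, _, hyS⟩ := hNprop x hN'
          rcases hx with hM | hS'
          exacts [hyM hM, hyS hS']
      have hskip1 := mbWin_dead_transfer t M (B ∪ N) S hdead hdisjMS hwin
      have hskip : mbWin m b F t M B :=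
        mbWin_breaker_shrink t M ((B ∪ N) ∪ S) B
          (fun x hx => Or.inl (Or.inl hx)) hskip1
      exact mbWinRestricted_succ t M B (ih M B hMB hsat hskip)

/-- Proposition 3.7. Let `m ≤ b` and let `H = (X, F)` be a
hypergraph with a collection `𝒱` of pairwise disjoint vertex sets such that
(1) every hyperedge has more than `m` vertices, (2) every set of `𝒱` has exactly
`m` vertices, (3) each set of `𝒱` is contained in or disjoint from each
hyperedge, and (4) every vertex outside `⋃ 𝒱` lies in at most one hyperedge.
If Maker (moving first) can win the `(m:b)` game on `H` within `t` rounds, she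
can also do so (equally fast) while in each move either claiming exactly a full
fresh set of `𝒱` or finishing a hyperedge and winning immediately. -/
theorem maker_plays_on_assoc_sets {X : Type} [Finite X] (m b : ℕ)
    (hm : 0 < m) (hmb : m ≤ b) (F 𝒱 : Set (Set X))
    (hdisj : ∀ W₁ ∈ 𝒱, ∀ W₂ ∈ 𝒱, W₁ ≠ W₂ → Disjoint W₁ W₂)
    (h1 : ∀ e ∈ F, m < e.ncard)
    (h2 : ∀ W ∈ 𝒱, W.ncard = m)
    (h3 : ∀ W ∈ 𝒱, ∀ e ∈ F, W ⊆ e ∨ Disjoint W e)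
    (h4 : ∀ x : X, (∀ W ∈ 𝒱, x ∉ W) → {e | e ∈ F ∧ x ∈ e}.Subsingleton) :
    ∀ t, mbWin m b F t ∅ ∅ → mbWinRestricted m b F 𝒱 t ∅ ∅ := by
  intro t h
  exact maker_plays_on_assoc_sets_aux m b hm hmb F 𝒱 hdisj h1 h2 h3 h4 t ∅ ∅
    (disjoint_bot_right) (fun W _ => Or.inr disjoint_bot_right) h
end

section
/- For every t ≥ 3 there exists a hypergraph H_t = (X_t, F_t) such that Breaker wins the unbiased Maker-Breaker game on H_t (via a pairing strategy), while t is the exact minimum number of rounds within which Waiter can win the unbiased Waiter-Client game on H_t. Concretely: take distinct elements a_1,...,a_4, b_1,...,b_4 disjoint from [2t−6] and let F_t = { {a_i, b_i} ∪ M : i ∈ [4], M ⊆ [2t−6], |M| = t−3 }. -/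
/-- The unbiased Waiter-Client game on the hypergraph with winning sets `F`:
each round Waiter offers two unclaimed board elements, Client keeps one and
gives the other to Waiter (a final single unclaimed element goes to Client).
`wcWin F t W C` means Waiter can claim a full winning set within `t` further
rounds from the position `(W, C)`. -/
def wcWin {X : Type} (F : Set (Set X)) : ℕ → Set X → Set X → Prop
  | 0, W, _ => ∃ e ∈ F, e ⊆ W
  | (t+1), W, C => (∃ e ∈ F, e ⊆ W) ∨
      ∃ x y, x ≠ y ∧ x ∉ W ∪ C ∧ y ∉ W ∪ C ∧
        wcWin F t (insert x W) (insert y C) ∧ wcWin F t (insert y W) (insert x C)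

/-- The hypergraph `H_t` of Claim 4.6: the board consists of the eight elements
`a_i = (i, 0)`, `b_i = (i, 1)` for `i ∈ Fin 4` together with `[2t - 6]`, and the
winning sets are the sets `{a_i, b_i} ∪ M` with `M ⊆ [2t - 6]`, `|M| = t - 3`. -/
def H19 (t : ℕ) : Set (Set ((Fin 4 × Fin 2) ⊕ Fin (2*t - 6))) :=
  {A | ∃ i : Fin 4, ∃ M : Set (Fin (2*t - 6)), M.ncard = t - 3 ∧
    A = {Sum.inl (i, 0), Sum.inl (i, 1)} ∪ Sum.inr '' M}

abbrev Xt (t : ℕ) := (Fin 4 × Fin 2) ⊕ Fin (2*t - 6)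

lemma no_win_aux {t : ℕ} {M B : Set (Xt t)} (hd : Disjoint M B)
    (hinv : ∀ i : Fin 4, ∀ j : Fin 2, Sum.inl (i, j) ∈ M → Sum.inl (i, j+1) ∈ B) :
    ¬ ∃ e ∈ H19 t, e ⊆ M := by
  rintro ⟨e, ⟨i, S, hS, rfl⟩, hsub⟩
  have h0 : Sum.inl (i, (0:Fin 2)) ∈ M := hsub (Set.mem_union_left _ (by simp))
  have h1 : Sum.inl (i, (1:Fin 2)) ∈ M := hsub (Set.mem_union_left _ (by simp))
  have hB := hinv i 0 h0
  rw [show (0:Fin 2)+1 = 1 from rfl] at hB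
  exact Set.disjoint_left.mp hd h1 hB

lemma mb_no (t : ℕ) : ∀ r (M B : Set (Xt t)), Disjoint M B →
    (∀ i : Fin 4, ∀ j : Fin 2, Sum.inl (i, j) ∈ M → Sum.inl (i, j+1) ∈ B) →
    ¬ mbWin 1 1 (H19 t) r M B := by
  intro r
  induction r with
  | zero => intro M B hd hinv h; exact no_win_aux hd hinv h
  | succ r ih =>
    intro M B hd hinv h
    rcases h with h | ⟨S, hSfin, hScard, hSdisj, hS⟩
    · exact no_win_aux hd hinv h
    rcases S.eq_empty_or_nonempty with rfl | ⟨x, hx⟩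
    · have hT := hS ∅ Set.finite_empty (by simp) (by simp)
      simp only [Set.union_empty] at hT
      exact ih M B hd hinv hT
    have hSx : S = {x} := by
      have h1 := (Set.ncard_le_one hSfin).mp hScard
      ext z; simp only [Set.mem_singleton_iff]
      exact ⟨fun hz => h1 _ hz _ hx, fun hz => hz ▸ hx⟩
    subst hSx
    have hxM : x ∉ M := fun h => Set.disjoint_left.mp hSdisj hx (Set.mem_union_left _ h)
    have hxB : x ∉ B := fun h => Set.disjoint_left.mp hSdisj hx (Set.mem_union_right _ h)
    obtain ⟨i, j⟩ | z := x
    · -- Maker claimed a pair element; Breaker takes partner if available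
      by_cases hyB : (Sum.inl (i, j+1) : Xt t) ∈ B
      · have hT := hS ∅ Set.finite_empty (by simp) (by simp)
        rw [Set.union_empty] at hT
        refine ih _ _ ?_ ?_ hT
        · rw [Set.disjoint_union_left]
          exact ⟨hd, by simp [hxB]⟩
        · rintro i' j' (h | h)
          · exact hinv i' j' h
          · simp only [Set.mem_singleton_iff, Sum.inl.injEq, Prod.mk.injEq] at h
            obtain ⟨rfl, rfl⟩ := h
            exact hyB
      · have hyM : (Sum.inl (i, j+1) : Xt t) ∉ M := by
          intro h
          have := hinv i (j+1) h
          rw [show ∀ a : Fin 2, a + 1 + 1 = a from by decide] at this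
          exact hxB this
        have hyx : (Sum.inl (i, j+1) : Xt t) ≠ Sum.inl (i, j) := by
          simp only [ne_eq, Sum.inl.injEq, Prod.mk.injEq, true_and]
          exact (by decide : ∀ a : Fin 2, a + 1 ≠ a) j
        have hT := hS {Sum.inl (i, j+1)} (Set.finite_singleton _) (by simp)
          (by simp [Set.disjoint_singleton_left, hyM, hyB, hyx])
        refine ih _ _ ?_ ?_ hT
        · rw [Set.disjoint_union_left, Set.disjoint_union_right, Set.disjoint_union_right]
          exact ⟨⟨hd, by simp [hyM]⟩, by simp [hxB], Set.disjoint_singleton.mpr hyx.symm⟩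
        · rintro i' j' (h | h)
          · exact Set.mem_union_left _ (hinv i' j' h)
          · simp only [Set.mem_singleton_iff, Sum.inl.injEq, Prod.mk.injEq] at h
            obtain ⟨rfl, rfl⟩ := h
            exact Set.mem_union_right _ rfl
    · -- Maker claimed a board element in [2t-6]; Breaker passes
      have hT := hS ∅ Set.finite_empty (by simp) (by simp)
      rw [Set.union_empty] at hT
      refine ih _ _ ?_ ?_ hT
      · rw [Set.disjoint_union_left]
        exact ⟨hd, by simp [hxB]⟩
      · rintro i' j' (h | h)
        · exact hinv i' j' h
        · simp at h


lemma wcWin_succ {X : Type} {F : Set (Set X)} {t : ℕ} {W C : Set X} (x y : X) (hxy : x ≠ y)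
    (hx : x ∉ W ∪ C) (hy : y ∉ W ∪ C) (h1 : wcWin F t (insert x W) (insert y C))
    (h2 : wcWin F t (insert y W) (insert x C)) : wcWin F (t+1) W C :=
  Or.inr ⟨x, y, hxy, hx, hy, h1, h2⟩

lemma fillA (s : ℕ) : ∀ k, k ≤ s → ∀ (W C : Set (Xt (s+3))),
    (∃ i : Fin 4, Sum.inl (i, (0:Fin 2)) ∈ W ∧ Sum.inl (i, (1:Fin 2)) ∈ W) →
    (∃ M0 : Set (Fin (2*(s+3) - 6)), M0.ncard = s - k ∧ Sum.inr '' M0 ⊆ W) →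
    (∀ z : Fin (2*(s+3) - 6), (z : ℕ) < 2*k → (Sum.inr z : Xt (s+3)) ∉ W ∪ C) →
    wcWin (H19 (s+3)) k W C := by
  intro k
  induction k with
  | zero =>
    rintro - W C ⟨i, h0, h1⟩ ⟨M0, hcard, hsub⟩ -
    exact ⟨_, ⟨i, M0, by omega, rfl⟩,
      Set.union_subset (by simp [Set.insert_subset_iff, h0, h1]) hsub⟩
  | succ k ih =>
    rintro hk W C ⟨i, h0, h1⟩ ⟨M0, hcard, hsub⟩ hfree
    have hb0 : 2*k < 2*(s+3) - 6 := by omega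
    have hb1 : 2*k+1 < 2*(s+3) - 6 := by omega
    set x : Xt (s+3) := Sum.inr ⟨2*k, hb0⟩ with hxdef
    set y : Xt (s+3) := Sum.inr ⟨2*k+1, hb1⟩ with hydef
    have hxfree : x ∉ W ∪ C := hfree ⟨2*k, hb0⟩ (by simp only [Fin.val_mk]; omega)
    have hyfree : y ∉ W ∪ C := hfree ⟨2*k+1, hb1⟩ (by simp only [Fin.val_mk]; omega)
    have hxW : x ∉ W := fun h => hxfree (Set.mem_union_left _ h)
    have hyW : y ∉ W := fun h => hyfree (Set.mem_union_left _ h)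
    refine wcWin_succ x y (by simp [hxdef, hydef, Fin.ext_iff]) hxfree hyfree ?_ ?_
    · refine ih (by omega) _ _ ⟨i, Set.mem_insert_of_mem _ h0, Set.mem_insert_of_mem _ h1⟩
        ⟨insert ⟨2*k, hb0⟩ M0, ?_, ?_⟩ ?_
      · rw [Set.ncard_insert_of_notMem (fun h => hxW (hsub ⟨_, h, rfl⟩))]
        omega
      · rw [Set.image_insert_eq]
        exact Set.insert_subset_insert hsub
      · intro z hz
        have h := hfree z (by omega)
        simp only [Set.mem_union, Set.mem_insert_iff, not_or] at h ⊢
        refine ⟨⟨?_, h.1⟩, ?_, h.2⟩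
        · simp [hxdef, Fin.ext_iff]; omega
        · simp [hydef, Fin.ext_iff]; omega
    · refine ih (by omega) _ _ ⟨i, Set.mem_insert_of_mem _ h0, Set.mem_insert_of_mem _ h1⟩
        ⟨insert ⟨2*k+1, hb1⟩ M0, ?_, ?_⟩ ?_
      · rw [Set.ncard_insert_of_notMem (fun h => hyW (hsub ⟨_, h, rfl⟩))]
        omega
      · rw [Set.image_insert_eq]
        exact Set.insert_subset_insert hsub
      · intro z hz
        have h := hfree z (by omega)
        simp only [Set.mem_union, Set.mem_insert_iff, not_or] at h ⊢
        refine ⟨⟨?_, h.1⟩, ?_, h.2⟩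
        · simp [hydef, Fin.ext_iff]; omega
        · simp [hxdef, Fin.ext_iff]; omega

lemma lemB (s : ℕ) (i0 i1 : Fin 4) (hne : i0 ≠ i1) (W C : Set (Xt (s+3)))
    (h0 : Sum.inl (i0, (0:Fin 2)) ∈ W) (h1 : Sum.inl (i1, (0:Fin 2)) ∈ W)
    (hall : ∀ z ∈ W ∪ C, ∃ i : Fin 4, z = Sum.inl (i, (0:Fin 2))) :
    wcWin (H19 (s+3)) (s+1) W C := by
  refine wcWin_succ (Sum.inl (i0, (1:Fin 2))) (Sum.inl (i1, (1:Fin 2)))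
    (by simp [hne]) ?_ ?_ ?_ ?_
  · intro h; obtain ⟨i, hi⟩ := hall _ h; simp at hi
  · intro h; obtain ⟨i, hi⟩ := hall _ h; simp at hi
  · refine fillA s s le_rfl _ _ ⟨i0, Set.mem_insert_of_mem _ h0, Set.mem_insert_iff.mpr (Or.inl rfl)⟩
      ⟨∅, by simp, by simp⟩ ?_
    intro z hz hmem
    rcases hmem with h | h
    · rcases Set.mem_insert_iff.mp h with h | h
      · simp at h
      · obtain ⟨i, hi⟩ := hall _ (Set.mem_union_left _ h); simp at hi
    · rcases Set.mem_insert_iff.mp h with h | h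
      · simp at h
      · obtain ⟨i, hi⟩ := hall _ (Set.mem_union_right _ h); simp at hi
  · refine fillA s s le_rfl _ _ ⟨i1, Set.mem_insert_of_mem _ h1, Set.mem_insert_iff.mpr (Or.inl rfl)⟩
      ⟨∅, by simp, by simp⟩ ?_
    intro z hz hmem
    rcases hmem with h | h
    · rcases Set.mem_insert_iff.mp h with h | h
      · simp at h
      · obtain ⟨i, hi⟩ := hall _ (Set.mem_union_left _ h); simp at hi
    · rcases Set.mem_insert_iff.mp h with h | h
      · simp at h
      · obtain ⟨i, hi⟩ := hall _ (Set.mem_union_right _ h); simp at hi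

lemma wc_upper (s : ℕ) : wcWin (H19 (s+3)) (s+3) ∅ ∅ := by
  show wcWin (H19 (s+3)) ((s+2)+1) ∅ ∅
  refine wcWin_succ (Sum.inl ((0:Fin 4), (0:Fin 2))) (Sum.inl ((1:Fin 4), (0:Fin 2)))
    (by simp [Prod.ext_iff]) (by simp) (by simp) ?_ ?_ <;>
  · show wcWin _ ((s+1)+1) _ _
    refine wcWin_succ (Sum.inl ((2:Fin 4), (0:Fin 2))) (Sum.inl ((3:Fin 4), (0:Fin 2)))
      (by simp [Prod.ext_iff]) (by simp [Set.mem_insert_iff, Prod.ext_iff])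
      (by simp [Set.mem_insert_iff, Prod.ext_iff]) ?_ ?_ <;>
    · refine lemB s _ _ (by decide) _ _ (Set.mem_insert _ _)
        (Set.mem_insert_of_mem _ (Set.mem_insert _ _)) ?_
      intro z hz
      rcases hz with h | h <;> simp only [Set.mem_insert_iff, Set.mem_empty_iff_false, or_false] at h <;>
        rcases h with rfl | rfl | rfl <;> exact ⟨_, rfl⟩
      


def WIp (t : ℕ) (W : Set (Xt t)) : Set (Fin 4 × Fin 2) := {p | Sum.inl p ∈ W}
def WRp (t : ℕ) (W : Set (Xt t)) : Set (Fin (2*t - 6)) := {z | Sum.inr z ∈ W}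
def pairFull (t : ℕ) (W : Set (Xt t)) : Prop :=
  ∃ i : Fin 4, Sum.inl (i, (0:Fin 2)) ∈ W ∧ Sum.inl (i, (1:Fin 2)) ∈ W

open Classical in
noncomputable def phi (t : ℕ) (W : Set (Xt t)) : ℕ :=
  (t - 3 - (WRp t W).ncard) + (3 - (if pairFull t W then 3 else min (WIp t W).ncard 2))

lemma phi_win {t : ℕ} {W : Set (Xt t)} (h : ∃ e ∈ H19 t, e ⊆ W) : phi t W = 0 := by
  obtain ⟨e, ⟨i, M, hM, rfl⟩, hsub⟩ := h
  have hp : pairFull t W :=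
    ⟨i, hsub (Set.mem_union_left _ (by simp)), hsub (Set.mem_union_left _ (by simp))⟩
  have hMsub : M ⊆ WRp t W := fun z hz => hsub (Set.mem_union_right _ ⟨z, hz, rfl⟩)
  have hcard : t - 3 ≤ (WRp t W).ncard := hM ▸ Set.ncard_le_ncard hMsub (Set.toFinite _)
  rw [phi, if_pos hp]
  omega

lemma WIp_insert_inl {t : ℕ} (W : Set (Xt t)) (p : Fin 4 × Fin 2) :
    WIp t (insert (Sum.inl p) W) = insert p (WIp t W) := by
  ext q; simp [WIp]

lemma WIp_insert_inr {t : ℕ} (W : Set (Xt t)) (z : Fin (2*t-6)) :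
    WIp t (insert (Sum.inr z) W) = WIp t W := by
  ext q; simp [WIp]

lemma WRp_insert_inl {t : ℕ} (W : Set (Xt t)) (p : Fin 4 × Fin 2) :
    WRp t (insert (Sum.inl p) W) = WRp t W := by
  ext q; simp [WRp]

lemma WRp_insert_inr {t : ℕ} (W : Set (Xt t)) (z : Fin (2*t-6)) :
    WRp t (insert (Sum.inr z) W) = insert z (WRp t W) := by
  ext q; simp [WRp]

lemma pairFull_insert_inr {t : ℕ} (W : Set (Xt t)) (z : Fin (2*t-6)) :
    pairFull t (insert (Sum.inr z) W) ↔ pairFull t W := by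
  simp [pairFull]

lemma pairFull_mono {t : ℕ} {W W' : Set (Xt t)} (h : W ⊆ W') (hp : pairFull t W) :
    pairFull t W' := by
  obtain ⟨i, h0, h1⟩ := hp; exact ⟨i, h h0, h h1⟩

lemma pairFull_insert_inl {t : ℕ} {W : Set (Xt t)} {i : Fin 4} {j : Fin 2}
    (h : pairFull t (insert (Sum.inl (i, j)) W)) :
    pairFull t W ∨ Sum.inl (i, j+1) ∈ W := by
  obtain ⟨i', h0, h1⟩ := h
  rcases Set.mem_insert_iff.mp h0 with heq0 | hm0
  · rw [Sum.inl.injEq, Prod.mk.injEq] at heq0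
    obtain ⟨rfl, rfl⟩ := heq0
    rcases Set.mem_insert_iff.mp h1 with heq1 | hm1
    · rw [Sum.inl.injEq, Prod.mk.injEq] at heq1
      exact absurd heq1.2 (by decide)
    · right; rw [show (0:Fin 2)+1 = 1 from by decide]; exact hm1
  · rcases Set.mem_insert_iff.mp h1 with heq1 | hm1
    · rw [Sum.inl.injEq, Prod.mk.injEq] at heq1
      obtain ⟨rfl, rfl⟩ := heq1
      right; rw [show (1:Fin 2)+1 = 0 from by decide]; exact hm0
    · exact Or.inl ⟨i', hm0, hm1⟩

lemma phi_drop {t : ℕ} (x : Xt t) (W : Set (Xt t)) (hx : x ∉ W) :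
    phi t W ≤ phi t (insert x W) + 1 ∨
      ∃ i j, x = Sum.inl (i, j) ∧ WIp t W = {(i, j+1)} := by
  classical
  obtain ⟨i, j⟩ | z := x
  · by_cases hp' : pairFull t (insert (Sum.inl (i, j)) W)
    · by_cases hp : pairFull t W
      · left
        rw [phi, phi, WRp_insert_inl, if_pos hp, if_pos hp']
        omega
      · rcases pairFull_insert_inl hp' with h | hq
        · exact absurd h hp
        by_cases hn : 2 ≤ (WIp t W).ncard
        · left
          rw [phi, phi, WRp_insert_inl, if_neg hp, if_pos hp']
          omega
        · right
          refine ⟨i, j, rfl, ?_⟩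
          have hmem : (i, j+1) ∈ WIp t W := hq
          refine Set.eq_singleton_iff_unique_mem.mpr ⟨hmem, fun q hq' => ?_⟩
          exact (Set.ncard_le_one (Set.toFinite _)).mp (by omega) _ hq' _ hmem
    · left
      have hp : ¬ pairFull t W := fun h => hp' (pairFull_mono (Set.subset_insert _ _) h)
      have hni : ((i, j) : Fin 4 × Fin 2) ∉ WIp t W := hx
      rw [phi, phi, WRp_insert_inl, if_neg hp, if_neg hp', WIp_insert_inl,
        Set.ncard_insert_of_notMem hni]
      omega
  · left
    have hnz : z ∉ WRp t W := hx
    by_cases hp : pairFull t W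
    · rw [phi, phi, WRp_insert_inr, if_pos hp, if_pos ((pairFull_insert_inr W z).mpr hp),
        Set.ncard_insert_of_notMem hnz]
      omega
    · rw [phi, phi, WRp_insert_inr, if_neg hp,
        if_neg (fun h => hp ((pairFull_insert_inr W z).mp h)),
        WIp_insert_inr, Set.ncard_insert_of_notMem hnz]
      omega

lemma phi_empty {t : ℕ} (ht : 3 ≤ t) : phi t (∅ : Set (Xt t)) = t := by
  have hp : ¬ pairFull t (∅ : Set (Xt t)) := by rintro ⟨i, h, -⟩; exact h
  have h1 : WIp t (∅ : Set (Xt t)) = ∅ := by ext q; simp [WIp]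
  have h2 : WRp t (∅ : Set (Xt t)) = ∅ := by ext q; simp [WRp]
  rw [phi, if_neg hp, h1, h2]
  simp
  omega

lemma wc_lower (t : ℕ) : ∀ r (W C : Set (Xt t)), r < phi t W → ¬ wcWin (H19 t) r W C := by
  intro r
  induction r with
  | zero => intro W C hr h; rw [phi_win h] at hr; omega
  | succ r ih =>
    rintro W C hr (h | ⟨x, y, hxy, hx, hy, h1, h2⟩)
    · rw [phi_win h] at hr; omega
    have hxW : x ∉ W := fun h => hx (Set.mem_union_left _ h)
    have hyW : y ∉ W := fun h => hy (Set.mem_union_left _ h)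
    rcases phi_drop x W hxW with hgood | ⟨i, j, rfl, hWI⟩
    · exact ih _ _ (by omega) h1
    rcases phi_drop y W hyW with hgood | ⟨i', j', rfl, hWI'⟩
    · exact ih _ _ (by omega) h2
    have heq : ((i, j+1) : Fin 4 × Fin 2) = (i', j'+1) := by
      have := hWI.symm.trans hWI'
      exact Set.singleton_eq_singleton_iff.mp this
    rw [Prod.mk.injEq] at heq
    obtain ⟨rfl, hj⟩ := heq
    have : j = j' := by
      have := congrArg (· + 1) hj
      simpa [show ∀ a : Fin 2, a + 1 + 1 = a from by decide] using this
    exact hxy (by rw [this])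

/-- Claim 4.6. For every `t ≥ 3` there is a hypergraph
(concretely `H_t = H19 t`) on which Breaker wins the unbiased Maker-Breaker
game (Maker moving first), while `t` is the exact minimum number of rounds
within which Waiter can win the unbiased Waiter-Client game. -/
theorem mb_loss_wc_exact_time (t : ℕ) (ht : 3 ≤ t) :
    (∀ r, ¬ mbWin 1 1 (H19 t) r ∅ ∅) ∧
    IsLeast {r : ℕ | wcWin (H19 t) r ∅ ∅} t := by
  constructor
  · intro r
    exact mb_no t r ∅ ∅ (by simp) (by simp)
  · obtain ⟨s, rfl⟩ : ∃ s, t = s + 3 := ⟨t - 3, by omega⟩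
    refine ⟨wc_upper s, fun r hr => ?_⟩
    by_contra h
    push_neg at h
    exact wc_lower (s+3) r ∅ ∅ (by rw [phi_empty (by omega)]; omega) hr
end
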